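/- Every ⟨H,T⟩ circuit admits a normalized representation: for every finite word w over the alphabet {H, T} (evaluated as the product of the corresponding matrices), there exist a normalized word c over {TH, SH}, a Clifford element g ∈ 𝒞, and b ∈ {0, 1} such that the evaluation of w equals H^b · (evaluation of c) · g up to phase. -/

import Mathlib

open Matrix Complex

noncomputable section

/-- The Hadamard gate. -/
noncomputable def Hm : Matrix (Fin 2) (Fin 2) ℂ :=
  (Complex.I / (Real.sqrt 2 : ℂ)) • !![1, 1; 1, -1]

/-- The T gate. -/
noncomputable def Tm : Matrix (Fin 2) (Fin 2) ℂ :=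
  !![Complex.exp (-(Real.pi / 8 : ℂ) * Complex.I), 0;
     0, Complex.exp ((Real.pi / 8 : ℂ) * Complex.I)]

/-- The phase gate `S = T²`. -/
noncomputable def Sm : Matrix (Fin 2) (Fin 2) ℂ := Tm * Tm

/-- `A` equals `B` up to a unit-modulus scalar (global phase). -/
def UpToPhase (A B : Matrix (Fin 2) (Fin 2) ℂ) : Prop :=
  ∃ z : ℂ, ‖z‖ = 1 ∧ A = z • B

/-- Evaluation of a word over the alphabet {H, S}. -/
noncomputable def evalHS (w : List Bool) : Matrix (Fin 2) (Fin 2) ℂ :=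
  (w.map (fun b => if b then Hm else Sm)).prod

/-- The Clifford group 𝒞: unitaries equal up to phase to a product of copies of H and S. -/
def Clifford (U : Matrix (Fin 2) (Fin 2) ℂ) : Prop :=
  U ∈ Matrix.unitaryGroup (Fin 2) ℂ ∧ ∃ w : List Bool, UpToPhase U (evalHS w)

/-- The syllables TH and SH. -/
inductive Syl : Type
  | TH : Syl
  | SH : Syl
deriving DecidableEq

/-- Evaluation of a syllable. -/
noncomputable def evalSyl : Syl → Matrix (Fin 2) (Fin 2) ℂ
  | Syl.TH => Tm * Hm
  | Syl.SH => Sm * Hm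

/-- Evaluation of a word over {TH, SH}. -/
noncomputable def evalWord (w : List Syl) : Matrix (Fin 2) (Fin 2) ℂ :=
  (w.map evalSyl).prod

/-- A word is normalized if it is empty, or it ends with TH and
contains no two consecutive SH syllables. -/
def Normalized (w : List Syl) : Prop :=
  w = [] ∨ (w.getLast? = some Syl.TH ∧ ¬ ([Syl.SH, Syl.SH] <:+: w))

/-- A canonical word: normalized and no SH among its first four syllables. -/
def Canonical (w : List Syl) : Prop :=
  Normalized w ∧ Syl.SH ∉ w.take 4

/-- The T-count of a word: the number of TH syllables. -/
def Tcount (w : List Syl) : ℕ := w.count Syl.TH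

/-- Trace distance between two matrices. -/
noncomputable def udist (U V : Matrix (Fin 2) (Fin 2) ℂ) : ℝ :=
  Real.sqrt ((2 - ‖(U * Vᴴ).trace‖) / 2)

/-- Letters of the alphabet {H, T}. -/
inductive HT : Type
  | H : HT
  | T : HT

/-- Evaluation of a word over {H, T}. -/
noncomputable def evalHT (w : List HT) : Matrix (Fin 2) (Fin 2) ℂ :=
  (w.map (fun l => match l with | HT.H => Hm | HT.T => Tm)).prod

noncomputable def Xm : Matrix (Fin 2) (Fin 2) ℂ := !![0, 1; 1, 0]

lemma exp_flip (x : ℂ) : Complex.exp (x + (Real.pi:ℂ) * Complex.I) = - Complex.exp x := by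
  rw [Complex.exp_add, Complex.exp_pi_mul_I]; ring

lemma exp_half : Complex.exp ((Real.pi:ℂ)/2 * Complex.I) = Complex.I := by
  rw [show ((Real.pi:ℂ)/2 * I) = (Real.pi/2 : ℝ) * I by push_cast; ring, Complex.exp_mul_I]
  rw [← Complex.ofReal_cos, ← Complex.ofReal_sin]
  norm_num

lemma exp_neg_half : Complex.exp (-((Real.pi:ℂ)/2) * Complex.I) = -Complex.I := by
  rw [show -((Real.pi:ℂ)/2)*I = -((Real.pi:ℂ)/2*I) by ring, Complex.exp_neg, exp_half,
    Complex.inv_I]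

lemma Sm_eq : Sm = !![Complex.exp (-(Real.pi / 4 : ℂ) * Complex.I), 0;
     0, Complex.exp ((Real.pi / 4 : ℂ) * Complex.I)] := by
  show Tm * Tm = _
  rw [Tm, Matrix.mul_fin_two, ← Complex.exp_add, ← Complex.exp_add,
    show (-(Real.pi/8:ℂ)*I) + (-(Real.pi/8:ℂ)*I) = -(Real.pi/4:ℂ)*I by ring,
    show ((Real.pi/8:ℂ)*I) + ((Real.pi/8:ℂ)*I) = (Real.pi/4:ℂ)*I by ring]
  norm_num

lemma S2m : Sm * Sm = !![-Complex.I, 0; 0, Complex.I] := by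
  rw [Sm_eq, Matrix.mul_fin_two, ← Complex.exp_add, ← Complex.exp_add,
    show (-(Real.pi/4:ℂ)*I) + (-(Real.pi/4:ℂ)*I) = -((Real.pi:ℂ)/2)*I by ring,
    show ((Real.pi/4:ℂ)*I) + ((Real.pi/4:ℂ)*I) = ((Real.pi:ℂ)/2)*I by ring,
    exp_half, exp_neg_half]
  norm_num

lemma S3m : Sm^3 = !![Complex.exp (-(3*Real.pi/4 : ℂ) * Complex.I), 0;
     0, Complex.exp ((3*Real.pi/4 : ℂ) * Complex.I)] := by
  rw [pow_succ, pow_two, S2m, Sm_eq, Matrix.mul_fin_two]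
  rw [show (-(3*Real.pi/4:ℂ)*I) = -(Real.pi/4:ℂ)*I + -((Real.pi:ℂ)/2)*I by ring,
    show ((3*Real.pi/4:ℂ)*I) = (Real.pi/4:ℂ)*I + ((Real.pi:ℂ)/2)*I by ring,
    Complex.exp_add, Complex.exp_add, exp_half, exp_neg_half]
  norm_num; ring_nf; simp

lemma maST : Sm * Tm = Tm * Sm := by
  rw [Sm_eq, Tm, Matrix.mul_fin_two, Matrix.mul_fin_two]; ring_nf

lemma maS4 : Sm^4 = (-1:ℂ) • 1 := by
  rw [show (4:ℕ) = 2*2 from rfl, pow_mul, pow_two, pow_two, S2m, Matrix.mul_fin_two]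
  rw [Matrix.one_fin_two, Matrix.smul_of]
  norm_num [Complex.I_mul_I]

lemma maXX : Xm * Xm = 1 := by
  rw [Xm, Matrix.mul_fin_two, Matrix.one_fin_two]; norm_num

lemma maXS : Xm * Sm = (-1:ℂ) • (Sm^3 * Xm) := by
  rw [S3m, Sm_eq, Xm, Matrix.mul_fin_two, Matrix.mul_fin_two, Matrix.smul_of]
  rw [show ((Real.pi/4:ℂ)*I) = -(3*Real.pi/4:ℂ)*I + (Real.pi:ℂ)*I by ring,
    show (-(Real.pi/4:ℂ)*I) = (3*Real.pi/4:ℂ)*I + -((Real.pi:ℂ)*I) by ring,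
    exp_flip, Complex.exp_add, Complex.exp_neg, Complex.exp_pi_mul_I]
  norm_num [Matrix.smul_cons]

lemma exp_neg_pi : Complex.exp (-((Real.pi:ℂ) * Complex.I)) = -1 := by
  rw [Complex.exp_neg, Complex.exp_pi_mul_I]; norm_num

lemma exp_flip' (x : ℂ) : Complex.exp (x - (Real.pi:ℂ) * Complex.I) = - Complex.exp x := by
  rw [sub_eq_add_neg, Complex.exp_add, exp_neg_pi]; ring

lemma maXT : Xm * Tm = (-1:ℂ) • (Tm * (Sm^3 * Xm)) := by
  rw [S3m, Xm, Tm, Matrix.mul_fin_two, Matrix.mul_fin_two, Matrix.mul_fin_two]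
  ext i j
  fin_cases i <;> fin_cases j <;> simp [Matrix.smul_apply, smul_eq_mul]
  · rw [← Complex.exp_add,
      show -((Real.pi:ℂ)/8*I) + -(3*(Real.pi:ℂ)/4*I) = (Real.pi:ℂ)/8*I - (Real.pi:ℂ)*I by ring,
      exp_flip']
    ring
  · rw [← Complex.exp_add,
      show ((Real.pi:ℂ)/8*I) + 3*(Real.pi:ℂ)/4*I = -((Real.pi:ℂ)/8*I) + (Real.pi:ℂ)*I by ring,
      exp_flip]
    ring

lemma h2c : ((Real.sqrt 2:ℝ):ℂ) * ((Real.sqrt 2:ℝ):ℂ) = 2 := by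
  rw [← Complex.ofReal_mul, Real.mul_self_sqrt (by norm_num : (0:ℝ) ≤ 2)]
  norm_num

lemma maHH : Hm * Hm = (-1:ℂ) • (1 : Matrix (Fin 2) (Fin 2) ℂ) := by
  rw [Hm, Matrix.smul_mul, Matrix.mul_smul, smul_smul, Matrix.mul_fin_two, Matrix.one_fin_two]
  ext i j
  fin_cases i <;> fin_cases j <;> simp [Matrix.smul_apply, smul_eq_mul] <;> field_simp <;>
    rw [Complex.I_sq, pow_two, h2c] <;> norm_num

lemma exp_quarter : Complex.exp ((Real.pi/4:ℂ) * Complex.I)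
    = ((Real.sqrt 2:ℝ):ℂ)/2 + (((Real.sqrt 2:ℝ):ℂ)/2) * Complex.I := by
  rw [show ((Real.pi/4:ℂ) * I) = (Real.pi/4 : ℝ) * I by push_cast; ring, Complex.exp_mul_I]
  rw [← Complex.ofReal_cos, ← Complex.ofReal_sin, Real.cos_pi_div_four, Real.sin_pi_div_four]
  push_cast; ring

lemma exp_neg_quarter : Complex.exp (-((Real.pi/4:ℂ) * Complex.I))
    = ((Real.sqrt 2:ℝ):ℂ)/2 - (((Real.sqrt 2:ℝ):ℂ)/2) * Complex.I := by
  rw [show (-((Real.pi/4:ℂ) * I)) = (-(Real.pi/4) : ℝ) * I by push_cast; ring, Complex.exp_mul_I]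
  rw [← Complex.ofReal_cos, ← Complex.ofReal_sin, Real.cos_neg, Real.sin_neg,
    Real.cos_pi_div_four, Real.sin_pi_div_four]
  push_cast; ring

lemma maXH : Xm * Hm = Complex.I • (Hm * (Sm * Sm)) := by
  rw [S2m, Xm, Hm, Matrix.mul_smul, Matrix.smul_mul, smul_smul, Matrix.mul_fin_two,
    Matrix.mul_fin_two]
  ext i j
  fin_cases i <;> fin_cases j <;> simp [Matrix.smul_apply, smul_eq_mul] <;>
    first
      | linear_combination (I/((Real.sqrt 2:ℝ):ℂ)) * Complex.I_mul_I
      | linear_combination (-(I/((Real.sqrt 2:ℝ):ℂ))) * Complex.I_mul_I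

lemma maS2H : (Sm * Sm) * Hm = (-Complex.I) • (Hm * Xm) := by
  rw [S2m, Xm, Hm, Matrix.mul_smul, Matrix.smul_mul, smul_smul, Matrix.mul_fin_two,
    Matrix.mul_fin_two]
  ext i j
  fin_cases i <;> fin_cases j <;> simp [Matrix.smul_apply, smul_eq_mul] <;> ring

lemma hne2 : ((Real.sqrt 2:ℝ):ℂ) ≠ 0 := by
  rw [Complex.ofReal_ne_zero]
  positivity

lemma keyHSH : !![(1:ℂ),1;1,-1] * (Sm * !![(1:ℂ),1;1,-1])
    = ((Real.sqrt 2:ℝ):ℂ) • (Sm * (!![(1:ℂ),1;1,-1] * (Sm * Xm))) := by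
  rw [Sm_eq, Xm, Matrix.mul_fin_two, Matrix.mul_fin_two, Matrix.mul_fin_two, Matrix.mul_fin_two]
  ext i j
  fin_cases i <;> fin_cases j <;> simp [Matrix.smul_apply, smul_eq_mul]
  · rw [← Complex.exp_add,
      show -((Real.pi:ℂ)/4*I) + (Real.pi:ℂ)/4*I = 0 by ring, Complex.exp_zero,
      exp_quarter, exp_neg_quarter]
    ring
  · rw [← Complex.exp_add,
      show -((Real.pi:ℂ)/4*I) + -((Real.pi:ℂ)/4*I) = -((Real.pi:ℂ)/2)*I by ring,
      exp_neg_half, exp_quarter, exp_neg_quarter]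
    ring
  · rw [← Complex.exp_add,
      show ((Real.pi:ℂ)/4*I) + (Real.pi:ℂ)/4*I = ((Real.pi:ℂ)/2)*I by ring,
      exp_half, exp_quarter, exp_neg_quarter]
    ring
  · rw [← Complex.exp_add,
      show ((Real.pi:ℂ)/4*I) + -((Real.pi:ℂ)/4*I) = 0 by ring, Complex.exp_zero,
      exp_quarter, exp_neg_quarter]
    ring

lemma maHSH : Hm * (Sm * Hm) = Complex.I • (Sm * (Hm * (Sm * Xm))) := by
  rw [Hm]
  simp only [Matrix.smul_mul, Matrix.mul_smul, smul_smul]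
  rw [keyHSH, smul_smul]
  congr 1
  field_simp

/-! ### UpToPhase infrastructure -/

lemma upp_refl (A : Matrix (Fin 2) (Fin 2) ℂ) : UpToPhase A A :=
  ⟨1, by simp, (one_smul _ _).symm⟩

lemma upp_of_eq {A B : Matrix (Fin 2) (Fin 2) ℂ} (h : A = B) : UpToPhase A B :=
  h ▸ upp_refl A

lemma upp_trans {A B C : Matrix (Fin 2) (Fin 2) ℂ}
    (h1 : UpToPhase A B) (h2 : UpToPhase B C) : UpToPhase A C := by
  obtain ⟨z, hz, rfl⟩ := h1
  obtain ⟨w, hw, rfl⟩ := h2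
  exact ⟨z * w, by rw [norm_mul, hz, hw, one_mul], by rw [smul_smul]⟩

lemma upp_symm {A B : Matrix (Fin 2) (Fin 2) ℂ} (h : UpToPhase A B) : UpToPhase B A := by
  obtain ⟨z, hz, rfl⟩ := h
  have hz0 : z ≠ 0 := by
    intro h0; rw [h0] at hz; simp at hz
  refine ⟨z⁻¹, by rw [norm_inv, hz, inv_one], ?_⟩
  rw [smul_smul, inv_mul_cancel₀ hz0, one_smul]

lemma upp_mul {A B C D : Matrix (Fin 2) (Fin 2) ℂ}
    (h1 : UpToPhase A B) (h2 : UpToPhase C D) : UpToPhase (A * C) (B * D) := by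
  obtain ⟨z, hz, rfl⟩ := h1
  obtain ⟨w, hw, rfl⟩ := h2
  exact ⟨z * w, by rw [norm_mul, hz, hw, one_mul],
    by rw [Matrix.smul_mul, Matrix.mul_smul, smul_smul]⟩

lemma upp_mul_left (L : Matrix (Fin 2) (Fin 2) ℂ) {A B : Matrix (Fin 2) (Fin 2) ℂ}
    (h : UpToPhase A B) : UpToPhase (L * A) (L * B) := upp_mul (upp_refl L) h

lemma upp_mul_right (R : Matrix (Fin 2) (Fin 2) ℂ) {A B : Matrix (Fin 2) (Fin 2) ℂ}
    (h : UpToPhase A B) : UpToPhase (A * R) (B * R) := upp_mul h (upp_refl R)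

lemma upp_smul {z : ℂ} (hz : ‖z‖ = 1) (A : Matrix (Fin 2) (Fin 2) ℂ) :
    UpToPhase (z • A) A := ⟨z, hz, rfl⟩

/-! ### Power manipulation lemmas -/

lemma maSTpow : ∀ j : ℕ, Sm ^ j * Tm = Tm * Sm ^ j := by
  intro j
  induction j with
  | zero => simp
  | succ n ih =>
    rw [pow_succ, mul_assoc, maST, ← mul_assoc, ih, mul_assoc]

lemma maXSpow : ∀ j : ℕ, UpToPhase (Xm * Sm ^ j) (Sm ^ (3 * j) * Xm) := by
  intro j
  induction j with
  | zero => exact upp_of_eq (by simp)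
  | succ n ih =>
    have h1 : Xm * Sm ^ (n + 1) = (Xm * Sm ^ n) * Sm := by rw [pow_succ, mul_assoc]
    have h2 : UpToPhase ((Xm * Sm ^ n) * Sm) ((Sm ^ (3 * n) * Xm) * Sm) :=
      upp_mul_right Sm ih
    have h3 : (Sm ^ (3 * n) * Xm) * Sm = Sm ^ (3 * n) * (Xm * Sm) := by rw [mul_assoc]
    have h4 : UpToPhase (Sm ^ (3 * n) * (Xm * Sm)) (Sm ^ (3 * (n + 1)) * Xm) := by
      rw [maXS, mul_smul_comm,
        show Sm ^ (3 * n) * (Sm ^ 3 * Xm) = Sm ^ (3 * (n + 1)) * Xm by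
          rw [← mul_assoc, ← pow_add]; ring_nf]
      exact upp_smul (by simp) _
    exact upp_trans (upp_of_eq h1) (upp_trans h2 (upp_trans (upp_of_eq h3) h4))

lemma maSmod (j : ℕ) : UpToPhase (Sm ^ j) (Sm ^ (j % 4)) := by
  conv_lhs => rw [← Nat.div_add_mod j 4]
  rw [pow_add, pow_mul, maS4, smul_pow, one_pow, Matrix.smul_mul, one_mul]
  exact upp_smul (by rw [norm_pow]; simp) _

lemma maXmod (k : ℕ) : Xm ^ k = Xm ^ (k % 2) := by
  conv_lhs => rw [← Nat.div_add_mod k 2]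
  rw [pow_add, pow_mul, pow_two, maXX, one_pow, one_mul]

/-! ### The D-subgroup push lemmas -/

lemma madT (j k : ℕ) : ∃ j', UpToPhase (Sm ^ j * Xm ^ k * Tm) (Tm * (Sm ^ j' * Xm ^ k)) := by
  rw [maXmod k]
  rcases Nat.mod_two_eq_zero_or_one k with h | h <;> rw [h]
  · exact ⟨j, upp_of_eq (by simp [maSTpow])⟩
  · refine ⟨j + 3, ?_⟩
    have : Sm ^ j * Xm ^ 1 * Tm = (-1 : ℂ) • (Tm * (Sm ^ (j + 3) * Xm ^ 1)) := by
      rw [pow_one, mul_assoc, maXT, mul_smul_comm]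
      congr 1
      rw [← mul_assoc, maSTpow, mul_assoc, ← mul_assoc (Sm ^ j), ← pow_add]
    rw [this]
    exact upp_smul (by simp) _

lemma maXkS (k j : ℕ) : ∃ j', UpToPhase (Xm ^ k * Sm ^ j) (Sm ^ j' * Xm ^ k) := by
  rw [maXmod k]
  rcases Nat.mod_two_eq_zero_or_one k with h | h <;> rw [h]
  · exact ⟨j, upp_of_eq (by rw [pow_zero, one_mul, mul_one])⟩
  · exact ⟨3 * j, by rw [pow_one]; exact maXSpow j⟩

lemma maXkH (k : ℕ) : ∃ k2, UpToPhase (Xm ^ k * Hm) (Hm * Sm ^ k2) := by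
  rw [maXmod k]
  rcases Nat.mod_two_eq_zero_or_one k with h | h <;> rw [h]
  · exact ⟨0, upp_of_eq (by simp)⟩
  · refine ⟨2, ?_⟩
    rw [pow_one, maXH]
    refine upp_trans (upp_smul (by simp) _) (upp_of_eq ?_)
    rw [pow_two]

lemma maSjH (j : ℕ) : ∃ (e : Bool) (k0 : ℕ),
    UpToPhase (Sm ^ j * Hm) ((bif e then Sm * Hm else Hm) * Xm ^ k0) := by
  have h4 : j % 4 < 4 := Nat.mod_lt _ (by norm_num)
  have hmod := maSmod j
  have base : UpToPhase (Sm ^ j * Hm) (Sm ^ (j % 4) * Hm) := upp_mul hmod (upp_refl Hm)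
  interval_cases h : j % 4
  · exact ⟨false, 0, upp_trans base (upp_of_eq (by simp))⟩
  · exact ⟨true, 0, upp_trans base (upp_of_eq (by simp))⟩
  · refine ⟨false, 1, upp_trans base ?_⟩
    rw [pow_two, maS2H]
    refine upp_trans (upp_smul (by simp) _) (upp_of_eq (by simp))
  · refine ⟨true, 1, upp_trans base ?_⟩
    have h3 : Sm ^ 3 * Hm = Sm * (Sm ^ 2 * Hm) := by
      rw [← mul_assoc, ← pow_succ']
    rw [h3, pow_two, maS2H, mul_smul_comm]
    refine upp_trans (upp_smul (by simp) _) (upp_of_eq ?_)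
    simp [mul_assoc]

lemma madH (j k : ℕ) : ∃ (e : Bool) (j' k' : ℕ),
    UpToPhase (Sm ^ j * Xm ^ k * Hm)
      ((bif e then Sm * Hm else Hm) * (Sm ^ j' * Xm ^ k')) := by
  obtain ⟨k2, hk2⟩ := maXkH k
  obtain ⟨e, k0, he⟩ := maSjH j
  obtain ⟨j'', hj''⟩ := maXkS k0 k2
  refine ⟨e, j'', k0, ?_⟩
  have s1 : UpToPhase (Sm ^ j * Xm ^ k * Hm) (Sm ^ j * (Hm * Sm ^ k2)) :=
    upp_trans (upp_of_eq (mul_assoc (Sm ^ j) (Xm ^ k) Hm)) (upp_mul_left _ hk2)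
  have s2 : UpToPhase (Sm ^ j * (Hm * Sm ^ k2))
      (((bif e then Sm * Hm else Hm) * Xm ^ k0) * Sm ^ k2) :=
    upp_trans (upp_of_eq (mul_assoc (Sm ^ j) Hm (Sm ^ k2)).symm) (upp_mul_right _ he)
  have s3 : UpToPhase (((bif e then Sm * Hm else Hm) * Xm ^ k0) * Sm ^ k2)
      ((bif e then Sm * Hm else Hm) * (Sm ^ j'' * Xm ^ k0)) :=
    upp_trans (upp_of_eq (mul_assoc (bif e then Sm * Hm else Hm) (Xm ^ k0) (Sm ^ k2)))
      (upp_mul_left _ hj'')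
  exact upp_trans s1 (upp_trans s2 s3)

/-! ### SHSH lemma -/

lemma maSHSH0 : UpToPhase ((Sm * Hm) * (Sm * Hm)) (Hm * Sm ^ 3) := by
  have e1 : (Sm * Hm) * (Sm * Hm) = Sm * (Hm * (Sm * Hm)) := by simp [mul_assoc]
  rw [e1, maHSH, mul_smul_comm]
  refine upp_trans (upp_smul (by simp) _) ?_
  have e2 : Sm * (Sm * (Hm * (Sm * Xm))) = (Sm * Sm) * Hm * (Sm * Xm) := by simp [mul_assoc]
  rw [e2, maS2H, Matrix.smul_mul]
  refine upp_trans (upp_smul (by simp) _) ?_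
  have e3 : Hm * Xm * (Sm * Xm) = Hm * ((Xm * Sm) * Xm) := by simp [mul_assoc]
  rw [e3, maXS, Matrix.smul_mul, mul_smul_comm]
  refine upp_trans (upp_smul (by simp) _) (upp_of_eq ?_)
  rw [mul_assoc, maXX, mul_one]

/-! ### Block lemmas for the main induction -/

lemma blkTH (A : Matrix (Fin 2) (Fin 2) ℂ) :
    UpToPhase (Tm * A) ((Tm * Hm) * (Hm * A)) := by
  have h : (Tm * Hm) * (Hm * A) = (-1 : ℂ) • (Tm * A) := by
    rw [mul_assoc, ← mul_assoc Hm, maHH, Matrix.smul_mul, one_mul, mul_smul_comm]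
  exact upp_symm (by rw [h]; exact upp_smul (by simp) _)

lemma blkS (A : Matrix (Fin 2) (Fin 2) ℂ) :
    UpToPhase ((Tm * Hm) * (Hm * (Tm * A))) (Sm * A) := by
  have h : (Tm * Hm) * (Hm * (Tm * A)) = (-1 : ℂ) • (Sm * A) := by
    rw [mul_assoc, ← mul_assoc Hm, maHH, Matrix.smul_mul, one_mul, mul_smul_comm,
      ← mul_assoc]
    rfl
  rw [h]
  exact upp_smul (by simp) _

lemma blkTS (A : Matrix (Fin 2) (Fin 2) ℂ) :
    UpToPhase ((Sm * Hm) * (Hm * (Tm * A))) (Tm * (Sm * A)) := by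
  have h : (Sm * Hm) * (Hm * (Tm * A)) = (-1 : ℂ) • (Tm * (Sm * A)) := by
    rw [mul_assoc, ← mul_assoc Hm, maHH, Matrix.smul_mul, one_mul, mul_smul_comm,
      ← mul_assoc, maST, mul_assoc]
  rw [h]
  exact upp_smul (by simp) _

lemma maSHSHA (A : Matrix (Fin 2) (Fin 2) ℂ) :
    UpToPhase ((Sm * Hm) * ((Sm * Hm) * A)) (Hm * (Sm ^ 3 * A)) :=
  upp_trans (upp_of_eq (mul_assoc (Sm * Hm) (Sm * Hm) A).symm)
    (upp_trans (upp_mul_right A maSHSH0) (upp_of_eq (mul_assoc Hm (Sm ^ 3) A)))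

lemma hbflip (b : ℕ) (hb : b ≤ 1) (A : Matrix (Fin 2) (Fin 2) ℂ) :
    ∃ b', b' ≤ 1 ∧ UpToPhase (Hm ^ b * (Hm * A)) (Hm ^ b' * A) := by
  interval_cases b
  · exact ⟨1, le_refl 1, upp_of_eq (by rw [pow_zero, one_mul, pow_one])⟩
  · refine ⟨0, by norm_num, ?_⟩
    have h : Hm ^ 1 * (Hm * A) = (-1 : ℂ) • A := by
      rw [pow_one, ← mul_assoc, maHH, Matrix.smul_mul, one_mul]
    rw [h, pow_zero, one_mul]
    exact upp_smul (by simp) _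

/-! ### The coset representatives -/

inductive PP : Type
  | pI : PP
  | pH : PP
  | pSH : PP

noncomputable def evalP : PP → Matrix (Fin 2) (Fin 2) ℂ
  | PP.pI => 1
  | PP.pH => Hm
  | PP.pSH => Sm * Hm

lemma maDmul (a b j k : ℕ) : ∃ j' k',
    UpToPhase ((Sm ^ a * Xm ^ b) * (Sm ^ j * Xm ^ k)) (Sm ^ j' * Xm ^ k') := by
  obtain ⟨j2, h⟩ := maXkS b j
  refine ⟨a + j2, b + k, ?_⟩
  have e1 : (Sm ^ a * Xm ^ b) * (Sm ^ j * Xm ^ k) = Sm ^ a * ((Xm ^ b * Sm ^ j) * Xm ^ k) := by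
    simp [mul_assoc]
  have e2 : Sm ^ a * ((Sm ^ j2 * Xm ^ b) * Xm ^ k) = Sm ^ (a + j2) * Xm ^ (b + k) := by
    rw [pow_add, pow_add]
    simp [mul_assoc]
  rw [e1, ← e2]
  exact upp_mul_left _ (upp_mul_right _ h)

lemma stepH (P : PP) (j k : ℕ) : ∃ P' j' k',
    UpToPhase ((evalP P * (Sm ^ j * Xm ^ k)) * Hm) (evalP P' * (Sm ^ j' * Xm ^ k')) := by
  obtain ⟨e, j2, k2, hd⟩ := madH j k
  have base : UpToPhase ((evalP P * (Sm ^ j * Xm ^ k)) * Hm)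
      (evalP P * ((bif e then Sm * Hm else Hm) * (Sm ^ j2 * Xm ^ k2))) := by
    refine upp_trans (upp_of_eq (mul_assoc (evalP P) (Sm ^ j * Xm ^ k) Hm))
      (upp_mul_left _ ?_)
    exact hd
  cases P
  case pI =>
    cases e
    · exact ⟨PP.pH, j2, k2, upp_trans base (upp_of_eq (by simp [evalP]))⟩
    · exact ⟨PP.pSH, j2, k2, upp_trans base (upp_of_eq (by simp [evalP]))⟩
  case pH =>
    cases e
    · refine ⟨PP.pI, j2, k2, upp_trans base ?_⟩
      have h : Hm * (Hm * (Sm ^ j2 * Xm ^ k2)) = (-1 : ℂ) • (Sm ^ j2 * Xm ^ k2) := by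
        rw [← mul_assoc, maHH, Matrix.smul_mul, one_mul]
      simp only [Bool.cond_false, evalP]
      rw [h]
      exact upp_trans (upp_smul (by simp) _) (upp_of_eq (by simp [evalP]))
    · -- Hm * ((Sm*Hm) * δ₂) ≈ (Sm*Hm) * ((Sm*Xm) * δ₂)
      obtain ⟨j3, k3, hD⟩ := maDmul 1 1 j2 k2
      refine ⟨PP.pSH, j3, k3, upp_trans base ?_⟩
      simp only [Bool.cond_true, evalP]
      have h1 : Hm * ((Sm * Hm) * (Sm ^ j2 * Xm ^ k2))
          = (Hm * (Sm * Hm)) * (Sm ^ j2 * Xm ^ k2) :=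
        (mul_assoc Hm (Sm * Hm) (Sm ^ j2 * Xm ^ k2)).symm
      rw [h1, maHSH, Matrix.smul_mul]
      refine upp_trans (upp_smul (by simp) _) ?_
      have h2 : Sm * (Hm * (Sm * Xm)) * (Sm ^ j2 * Xm ^ k2)
          = (Sm * Hm) * ((Sm ^ 1 * Xm ^ 1) * (Sm ^ j2 * Xm ^ k2)) := by
        simp [mul_assoc]
      rw [h2]
      exact upp_mul_left _ (by simpa using hD)
  case pSH =>
    cases e
    · refine ⟨PP.pI, 1 + j2, k2, upp_trans base ?_⟩
      simp only [Bool.cond_false, evalP]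
      have h : (Sm * Hm) * (Hm * (Sm ^ j2 * Xm ^ k2))
          = (-1 : ℂ) • (Sm ^ (1 + j2) * Xm ^ k2) := by
        rw [mul_assoc, ← mul_assoc Hm, maHH, Matrix.smul_mul, one_mul, mul_smul_comm,
          pow_add, pow_one]
        rw [mul_assoc]
      rw [h]
      exact upp_trans (upp_smul (by simp) _) (upp_of_eq (by simp [evalP]))
    · refine ⟨PP.pH, 3 + j2, k2, upp_trans base ?_⟩
      simp only [Bool.cond_true, evalP]
      refine upp_trans (maSHSHA _) (upp_of_eq ?_)
      rw [show Sm ^ 3 * (Sm ^ j2 * Xm ^ k2) = Sm ^ (3 + j2) * Xm ^ k2 by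
        rw [← mul_assoc, ← pow_add]]

/-! ### Word evaluation lemmas -/

lemma evalWord_nil : evalWord [] = 1 := rfl

lemma evalWord_concat (c : List Syl) (s : Syl) :
    evalWord (c ++ [s]) = evalWord c * evalSyl s := by
  simp [evalWord]

lemma evalWord_concat2 (c : List Syl) (s t : Syl) :
    evalWord (c ++ [s, t]) = evalWord c * (evalSyl s * evalSyl t) := by
  simp [evalWord, mul_assoc]

lemma evalHT_concat (w : List HT) (x : HT) :
    evalHT (w ++ [x]) = evalHT w * evalHT [x] := by
  simp [evalHT]

/-! ### The no-SS predicate -/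

def Ok (c : List Syl) : Prop :=
  List.IsChain (fun a b => ¬(a = Syl.SH ∧ b = Syl.SH)) c

lemma ok_nil : Ok [] := List.isChain_nil

lemma ok_concat_TH {c : List Syl} (h : Ok c) : Ok (c ++ [Syl.TH]) := by
  rw [Ok, List.isChain_append]
  exact ⟨h, List.isChain_singleton _, by simp⟩

lemma ok_concat_SHTH {c : List Syl} (h : Ok c) (hl : c.getLast? ≠ some Syl.SH) :
    Ok (c ++ [Syl.SH, Syl.TH]) := by
  rw [Ok, List.isChain_append]
  refine ⟨h, ?_, ?_⟩
  · simp [List.isChain_cons]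
  · intro x hx y hy
    simp at hy
    subst hy
    intro ⟨h1, _⟩
    exact hl (by rw [← h1]; exact hx)

lemma ok_dropLast {c : List Syl} {s : Syl} (h : Ok (c ++ [s])) : Ok c :=
  List.IsChain.prefix h ⟨[s], rfl⟩

lemma ok_no_ss {c : List Syl} (h : Ok c) : ¬ ([Syl.SH, Syl.SH] <:+: c) := by
  intro hinf
  have := List.IsChain.infix h hinf
  rw [List.isChain_pair] at this
  exact this ⟨rfl, rfl⟩

lemma not_ok_ssconcat (c : List Syl) : ¬ Ok ((c ++ [Syl.SH]) ++ [Syl.SH]) := by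
  intro h
  exact ok_no_ss h ⟨c, [], by simp⟩

/-! ### Clifford lemmas -/

lemma evalHS_concat (w : List Bool) (b : Bool) :
    evalHS (w ++ [b]) = evalHS w * evalHS [b] := by
  simp [evalHS]

lemma unitary_Hm : Hm ∈ Matrix.unitaryGroup (Fin 2) ℂ := by
  rw [Matrix.mem_unitaryGroup_iff]
  ext i j
  fin_cases i <;> fin_cases j <;>
    simp [Hm, Matrix.mul_apply, Fin.sum_univ_two, Matrix.star_apply, Matrix.one_apply,
      Matrix.smul_apply, smul_eq_mul, map_div₀, Complex.conj_I] <;>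
  · field_simp
    rw [Complex.I_sq, pow_two, h2c]
    ring

lemma unitary_Tm : Tm ∈ Matrix.unitaryGroup (Fin 2) ℂ := by
  rw [Matrix.mem_unitaryGroup_iff]
  ext i j
  fin_cases i <;> fin_cases j <;>
    simp [Tm, Matrix.mul_apply, Fin.sum_univ_two, Matrix.star_apply, Matrix.one_apply,
      smul_eq_mul, ← Complex.exp_conj, _root_.map_mul, map_neg, map_div₀, map_ofNat,
      Complex.conj_I, Complex.conj_ofReal] <;>
  · rw [← Complex.exp_add]
    simp [neg_add_cancel, add_neg_cancel]

lemma unitary_Sm : Sm ∈ Matrix.unitaryGroup (Fin 2) ℂ := mul_mem unitary_Tm unitary_Tm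

lemma unitary_Xm : Xm ∈ Matrix.unitaryGroup (Fin 2) ℂ := by
  rw [Matrix.mem_unitaryGroup_iff]
  ext i j
  fin_cases i <;> fin_cases j <;>
    simp [Xm, Matrix.mul_apply, Fin.sum_univ_two, Matrix.star_apply, Matrix.one_apply]

lemma clifford_one : Clifford 1 :=
  ⟨one_mem _, [], upp_refl _⟩

lemma clifford_Hm : Clifford Hm :=
  ⟨unitary_Hm, [true], upp_of_eq (by simp [evalHS])⟩

lemma clifford_Sm : Clifford Sm :=
  ⟨unitary_Sm, [false], upp_of_eq (by simp [evalHS])⟩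

lemma clifford_mul {g h : Matrix (Fin 2) (Fin 2) ℂ} (hg : Clifford g) (hh : Clifford h) :
    Clifford (g * h) := by
  obtain ⟨hgu, wg, hgw⟩ := hg
  obtain ⟨hhu, wh, hhw⟩ := hh
  refine ⟨mul_mem hgu hhu, wg ++ wh, ?_⟩
  have : evalHS (wg ++ wh) = evalHS wg * evalHS wh := by simp [evalHS]
  rw [this]
  exact upp_mul hgw hhw

lemma clifford_Xm : Clifford Xm := by
  refine ⟨unitary_Xm, [true, false, false, true], ?_⟩
  have h : evalHS [true, false, false, true] = Hm * (Sm * (Sm * Hm)) := by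
    simp [evalHS, mul_assoc]
  rw [h]
  -- Xm = -I • (Hm * (Sm * (Sm * Hm)))  since Hm*(Sm*Sm*Hm) = I • Xm
  have h2 : Hm * (Sm * (Sm * Hm)) = Complex.I • Xm := by
    have e1 : Hm * (Sm * (Sm * Hm)) = Hm * ((Sm * Sm) * Hm) := by simp [mul_assoc]
    rw [e1, maS2H, mul_smul_comm, ← mul_assoc, maHH, Matrix.smul_mul, one_mul, smul_smul]
    norm_num
  rw [h2]
  exact upp_symm (upp_smul (by simp) _)

lemma clifford_pow {g : Matrix (Fin 2) (Fin 2) ℂ} (hg : Clifford g) (n : ℕ) :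
    Clifford (g ^ n) := by
  induction n with
  | zero => simpa using clifford_one
  | succ m ih => rw [pow_succ]; exact clifford_mul ih hg

lemma clifford_evalP (P : PP) : Clifford (evalP P) := by
  cases P
  · exact clifford_one
  · exact clifford_Hm
  · exact clifford_mul clifford_Sm clifford_Hm

/-! ### Main invariant -/

lemma main_invariant (w : List HT) : ∃ (b : ℕ) (c : List Syl) (P : PP) (j k : ℕ),
    b ≤ 1 ∧ Ok c ∧
    UpToPhase (evalHT w) (Hm ^ b * (evalWord c * (evalP P * (Sm ^ j * Xm ^ k)))) := by
  induction w using List.reverseRecOn with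
  | nil =>
    refine ⟨0, [], PP.pI, 0, 0, by norm_num, ok_nil, upp_of_eq ?_⟩
    simp [evalHT, evalWord, evalP]
  | append_singleton w x ih =>
    obtain ⟨b, c, P, j, k, hb, hok, hupp⟩ := ih
    have hstep : UpToPhase (evalHT (w ++ [x]))
        ((Hm ^ b * (evalWord c * (evalP P * (Sm ^ j * Xm ^ k)))) * evalHT [x]) := by
      rw [evalHT_concat]
      exact upp_mul hupp (upp_refl _)
    cases x
    case H =>
      have hH : evalHT [HT.H] = Hm := by simp [evalHT]
      rw [hH] at hstep
      obtain ⟨P', j', k', hs⟩ := stepH P j k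
      refine ⟨b, c, P', j', k', hb, hok, upp_trans hstep ?_⟩
      have e1 : (Hm ^ b * (evalWord c * (evalP P * (Sm ^ j * Xm ^ k)))) * Hm
          = Hm ^ b * (evalWord c * ((evalP P * (Sm ^ j * Xm ^ k)) * Hm)) := by
        simp [mul_assoc]
      rw [e1]
      exact upp_mul_left _ (upp_mul_left _ hs)
    case T =>
      have hT : evalHT [HT.T] = Tm := by simp [evalHT]
      rw [hT] at hstep
      obtain ⟨j2, hdT⟩ := madT j k
      have hstep2 : UpToPhase (evalHT (w ++ [HT.T]))
          (Hm ^ b * (evalWord c * (evalP P * (Tm * (Sm ^ j2 * Xm ^ k))))) := by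
        refine upp_trans hstep ?_
        have e1 : (Hm ^ b * (evalWord c * (evalP P * (Sm ^ j * Xm ^ k)))) * Tm
            = Hm ^ b * (evalWord c * (evalP P * ((Sm ^ j * Xm ^ k) * Tm))) := by
          simp [mul_assoc]
        rw [e1]
        exact upp_mul_left _ (upp_mul_left _ (upp_mul_left _ hdT))
      cases P
      case pI =>
        refine ⟨b, c ++ [Syl.TH], PP.pH, j2, k, hb, ok_concat_TH hok, upp_trans hstep2 ?_⟩
        have e1 : Hm ^ b * (evalWord c * (evalP PP.pI * (Tm * (Sm ^ j2 * Xm ^ k))))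
            = Hm ^ b * (evalWord c * (Tm * (Sm ^ j2 * Xm ^ k))) := by
          simp [evalP]
        rw [e1]
        refine upp_trans (upp_mul_left _ (upp_mul_left _ (blkTH _))) (upp_of_eq ?_)
        rw [evalWord_concat]
        simp [evalSyl, evalP, mul_assoc]
      case pH =>
        rcases List.eq_nil_or_concat' c with rfl | ⟨c₀, s, rfl⟩
        · -- c = []
          have e1 : Hm ^ b * (evalWord [] * (evalP PP.pH * (Tm * (Sm ^ j2 * Xm ^ k))))
              = Hm ^ b * (Hm * (Tm * (Sm ^ j2 * Xm ^ k))) := by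
            simp [evalWord, evalP]
          rw [e1] at hstep2
          obtain ⟨b', hb', hf⟩ := hbflip b hb (Tm * (Sm ^ j2 * Xm ^ k))
          refine ⟨b', [Syl.TH], PP.pH, j2, k, hb', by simpa using ok_concat_TH ok_nil,
            upp_trans hstep2 (upp_trans hf ?_)⟩
          refine upp_trans (upp_mul_left _ (blkTH _)) (upp_of_eq ?_)
          simp [evalWord, evalSyl, evalP, mul_assoc]
        · cases s
          case TH =>
            have e1 : Hm ^ b * (evalWord (c₀ ++ [Syl.TH]) *
                  (evalP PP.pH * (Tm * (Sm ^ j2 * Xm ^ k))))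
                = Hm ^ b * (evalWord c₀ *
                    ((Tm * Hm) * (Hm * (Tm * (Sm ^ j2 * Xm ^ k))))) := by
              rw [evalWord_concat]
              simp [evalSyl, evalP, mul_assoc]
            rw [e1] at hstep2
            refine ⟨b, c₀, PP.pI, 1 + j2, k, hb, ok_dropLast hok,
              upp_trans hstep2 (upp_trans (upp_mul_left _ (upp_mul_left _ (blkS _)))
                (upp_of_eq ?_))⟩
            simp [evalP, pow_add, mul_assoc]
          case SH =>
            have e1 : Hm ^ b * (evalWord (c₀ ++ [Syl.SH]) *
                  (evalP PP.pH * (Tm * (Sm ^ j2 * Xm ^ k))))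
                = Hm ^ b * (evalWord c₀ *
                    ((Sm * Hm) * (Hm * (Tm * (Sm ^ j2 * Xm ^ k))))) := by
              rw [evalWord_concat]
              simp [evalSyl, evalP, mul_assoc]
            rw [e1] at hstep2
            refine ⟨b, c₀ ++ [Syl.TH], PP.pH, 1 + j2, k, hb,
              ok_concat_TH (ok_dropLast hok), ?_⟩
            refine upp_trans hstep2 (upp_trans (upp_mul_left _ (upp_mul_left _ (blkTS _))) ?_)
            refine upp_trans (upp_mul_left _ (upp_mul_left _ (blkTH _))) (upp_of_eq ?_)
            rw [evalWord_concat]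
            simp [evalSyl, evalP, pow_add, mul_assoc]
      case pSH =>
        rcases List.eq_nil_or_concat' c with rfl | ⟨c₀, s, rfl⟩
        · -- c = [] : append [SH, TH]
          refine ⟨b, [Syl.SH, Syl.TH], PP.pH, j2, k, hb,
            by simpa using ok_concat_SHTH ok_nil (by simp), upp_trans hstep2 ?_⟩
          have e1 : Hm ^ b * (evalWord [] * (evalP PP.pSH * (Tm * (Sm ^ j2 * Xm ^ k))))
              = Hm ^ b * ((Sm * Hm) * (Tm * (Sm ^ j2 * Xm ^ k))) := by
            simp [evalWord, evalP]
          rw [e1]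
          refine upp_trans (upp_mul_left _ (upp_mul_left _ (blkTH _))) (upp_of_eq ?_)
          simp [evalWord, evalSyl, evalP, mul_assoc]
        · cases s
          case TH =>
            refine ⟨b, (c₀ ++ [Syl.TH]) ++ [Syl.SH, Syl.TH], PP.pH, j2, k, hb,
              ok_concat_SHTH hok (by simp [List.getLast?_concat]), upp_trans hstep2 ?_⟩
            have e1 : Hm ^ b * (evalWord (c₀ ++ [Syl.TH]) *
                  (evalP PP.pSH * (Tm * (Sm ^ j2 * Xm ^ k))))
                = Hm ^ b * (evalWord (c₀ ++ [Syl.TH]) *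
                    ((Sm * Hm) * (Tm * (Sm ^ j2 * Xm ^ k)))) := by
              simp [evalP]
            rw [e1]
            refine upp_trans
              (upp_mul_left _ (upp_mul_left _ (upp_mul_left _ (blkTH _)))) (upp_of_eq ?_)
            rw [evalWord_concat2]
            simp [evalSyl, evalP, mul_assoc]
          case SH =>
            -- c = c₀ ++ [SH] with pending SH: use SHSH ≈ H S³
            have e1 : Hm ^ b * (evalWord (c₀ ++ [Syl.SH]) *
                  (evalP PP.pSH * (Tm * (Sm ^ j2 * Xm ^ k))))
                = Hm ^ b * (evalWord c₀ *
                    ((Sm * Hm) * ((Sm * Hm) * (Tm * (Sm ^ j2 * Xm ^ k))))) := by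
              rw [evalWord_concat]
              simp [evalSyl, evalP, mul_assoc]
            rw [e1] at hstep2
            have hpush : UpToPhase ((Sm * Hm) * ((Sm * Hm) * (Tm * (Sm ^ j2 * Xm ^ k))))
                (Hm * (Tm * (Sm ^ (3 + j2) * Xm ^ k))) := by
              refine upp_trans (maSHSHA _) (upp_of_eq ?_)
              rw [← mul_assoc (Sm ^ 3), maSTpow, mul_assoc, ← mul_assoc (Sm ^ 3), ← pow_add]
            have hstep3 : UpToPhase (evalHT (w ++ [HT.T]))
                (Hm ^ b * (evalWord c₀ * (Hm * (Tm * (Sm ^ (3 + j2) * Xm ^ k))))) :=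
              upp_trans hstep2 (upp_mul_left _ (upp_mul_left _ hpush))
            rcases List.eq_nil_or_concat' c₀ with rfl | ⟨c₁, s₁, rfl⟩
            · -- c₀ = []
              have e2 : Hm ^ b * (evalWord [] * (Hm * (Tm * (Sm ^ (3 + j2) * Xm ^ k))))
                  = Hm ^ b * (Hm * (Tm * (Sm ^ (3 + j2) * Xm ^ k))) := by
                simp [evalWord]
              rw [e2] at hstep3
              obtain ⟨b', hb', hf⟩ := hbflip b hb (Tm * (Sm ^ (3 + j2) * Xm ^ k))
              refine ⟨b', [Syl.TH], PP.pH, 3 + j2, k, hb', by simpa using ok_concat_TH ok_nil,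
                upp_trans hstep3 (upp_trans hf ?_)⟩
              refine upp_trans (upp_mul_left _ (blkTH _)) (upp_of_eq ?_)
              simp [evalWord, evalSyl, evalP, mul_assoc]
            · cases s₁
              case TH =>
                have e2 : Hm ^ b * (evalWord (c₁ ++ [Syl.TH]) *
                      (Hm * (Tm * (Sm ^ (3 + j2) * Xm ^ k))))
                    = Hm ^ b * (evalWord c₁ *
                        ((Tm * Hm) * (Hm * (Tm * (Sm ^ (3 + j2) * Xm ^ k))))) := by
                  rw [evalWord_concat]
                  simp [evalSyl, mul_assoc]
                rw [e2] at hstep3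
                refine ⟨b, c₁, PP.pI, 4 + j2, k, hb, ok_dropLast (ok_dropLast hok),
                  upp_trans hstep3 (upp_trans (upp_mul_left _ (upp_mul_left _ (blkS _)))
                    (upp_of_eq ?_))⟩
                have e3 : Sm * (Sm ^ (3 + j2) * Xm ^ k) = Sm ^ (4 + j2) * Xm ^ k := by
                  rw [← mul_assoc, ← pow_succ']
                  ring_nf
                rw [e3]
                simp [evalP]
              case SH =>
                exact absurd hok (not_ok_ssconcat c₁)


theorem normalized_representation (w : List HT) :
    ∃ (c : List Syl) (g : Matrix (Fin 2) (Fin 2) ℂ) (b : ℕ),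
      Normalized c ∧ Clifford g ∧ b ≤ 1 ∧
      UpToPhase (evalHT w) (Hm ^ b * evalWord c * g) := by

  obtain ⟨b, c, P, j, k, hb, hok, hupp⟩ := main_invariant w
  have hgPD : Clifford (evalP P * (Sm ^ j * Xm ^ k)) :=
    clifford_mul (clifford_evalP P)
      (clifford_mul (clifford_pow clifford_Sm j) (clifford_pow clifford_Xm k))
  rcases List.eq_nil_or_concat' c with rfl | ⟨c₀, s, rfl⟩
  · refine ⟨[], evalP P * (Sm ^ j * Xm ^ k), b, Or.inl rfl, hgPD, hb,
      upp_trans hupp (upp_of_eq ?_)⟩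
    simp [evalWord, mul_assoc]
  · cases s
    case TH =>
      refine ⟨c₀ ++ [Syl.TH], evalP P * (Sm ^ j * Xm ^ k), b,
        Or.inr ⟨by simp [List.getLast?_concat], ok_no_ss hok⟩, hgPD, hb,
        upp_trans hupp (upp_of_eq ?_)⟩
      simp [mul_assoc]
    case SH =>
      refine ⟨c₀, (Sm * Hm) * (evalP P * (Sm ^ j * Xm ^ k)), b, ?_,
        clifford_mul (clifford_mul clifford_Sm clifford_Hm) hgPD, hb,
        upp_trans hupp (upp_of_eq ?_)⟩
      · rcases List.eq_nil_or_concat' c₀ with rfl | ⟨c₁, s₁, rfl⟩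
        · exact Or.inl rfl
        · cases s₁
          case TH =>
            exact Or.inr ⟨by simp [List.getLast?_concat], ok_no_ss (ok_dropLast hok)⟩
          case SH =>
            exact absurd hok (not_ok_ssconcat c₁)
      · rw [evalWord_concat]
        simp [evalSyl, mul_assoc]

end
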